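/- For $p \ge 2$ there exists a constant $c_p \in (0,1]$ such that for all complex numbers $u, v$, $C_p(u,v) := |u|^p - |u-v|^p - p|u-v|^{p-2}\,\mathrm{Re}((u-v)\overline{v}) \ge c_p |v|^p$. In particular, $C_p(u,v) = 0$ if and only if $v = 0$. -/

import Mathlib

/-!
Write `u = a + b` with `a = u - v`, `b = v`. For `p ≥ 2`, the parallelogram law combined with the
convexity and superadditivity of `t ↦ t ^ (p / 2)` gives the Clarkson-type inequality
`2 (‖x‖^p + ‖y‖^p) ≤ ‖x + y‖^p + ‖x - y‖^p`. Applied at `x = a + b/2`, `y = b/2`, and combined with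
the tangent-line inequality for the convex function `‖·‖^p` at `a`, it yields
`‖a + b‖^p ≥ ‖a‖^p + p ‖a‖^(p-2) ⟪a, b⟫ + 2^(1-p) ‖b‖^p`, i.e. `C_p(u, v) ≥ 2^(1-p) |v|^p`.
-/

noncomputable def Cfun (p : ℝ) (u v : ℂ) : ℝ :=
  ‖u‖ ^ p - ‖u - v‖ ^ p - p * ‖u - v‖ ^ (p - 2) * ((u - v) * (starRingEnd ℂ) v).re

open Real

lemma rpow_add_mul_sub_le_rpow {p s t : ℝ} (hp : 1 ≤ p) (hs : 0 < s) (ht : 0 ≤ t) :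
    s ^ p + p * s ^ (p - 1) * (t - s) ≤ t ^ p := by
  have bernoulli := one_add_mul_self_le_rpow_one_add (by linarith [div_nonneg ht hs.le] :
    (-1 : ℝ) ≤ t / s - 1) hp
  rw [add_sub_cancel, div_rpow ht hs.le, le_div_iff₀ (rpow_pos_of_pos hs p)] at bernoulli
  have hsplit : s ^ p = s * s ^ (p - 1) := by
    rw [← rpow_one_add' hs.le (by linarith), add_sub_cancel]
  calc s ^ p + p * s ^ (p - 1) * (t - s) = (1 + p * (t / s - 1)) * s ^ p := by
        rw [hsplit]; field_simp
    _ ≤ t ^ p := bernoulli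

section InnerProductSpace

variable {E : Type*} [NormedAddCommGroup E] [InnerProductSpace ℝ E]

lemma norm_rpow_add_mul_inner_le {p : ℝ} (hp : 1 ≤ p) (a w : E) :
    ‖a‖ ^ p + p * ‖a‖ ^ (p - 2) * inner ℝ a w ≤ ‖a + w‖ ^ p := by
  rcases eq_or_ne a 0 with rfl | ha
  · simpa [zero_rpow (by linarith : p ≠ 0)] using rpow_nonneg (norm_nonneg w) p
  have hna : 0 < ‖a‖ := norm_pos_iff.2 ha
  have hinner : inner ℝ a w ≤ ‖a‖ * (‖a + w‖ - ‖a‖) := by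
    have := real_inner_le_norm a (a + w)
    rw [inner_add_right, real_inner_self_eq_norm_mul_norm] at this
    linarith
  have hsplit : ‖a‖ ^ (p - 1) = ‖a‖ * ‖a‖ ^ (p - 2) := by
    rw [show p - 1 = 1 + (p - 2) by ring, rpow_add hna, rpow_one]
  calc ‖a‖ ^ p + p * ‖a‖ ^ (p - 2) * inner ℝ a w
      ≤ ‖a‖ ^ p + p * ‖a‖ ^ (p - 2) * (‖a‖ * (‖a + w‖ - ‖a‖)) := by gcongr
    _ = ‖a‖ ^ p + p * ‖a‖ ^ (p - 1) * (‖a + w‖ - ‖a‖) := by rw [hsplit]; ring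
    _ ≤ ‖a + w‖ ^ p := rpow_add_mul_sub_le_rpow hp hna (norm_nonneg _)

lemma two_mul_norm_rpow_add_norm_rpow_le {p : ℝ} (hp : 2 ≤ p) (x y : E) :
    2 * (‖x‖ ^ p + ‖y‖ ^ p) ≤ ‖x + y‖ ^ p + ‖x - y‖ ^ p := by
  have hr : 1 ≤ p / 2 := by linarith
  have hsq : ∀ z : E, (‖z‖ ^ 2) ^ (p / 2) = ‖z‖ ^ p := fun z => by
    rw [← rpow_natCast, ← rpow_mul (norm_nonneg z)]; ring_nf
  have parallelogram : ‖x + y‖ ^ 2 + ‖x - y‖ ^ 2 = 2 * (‖x‖ ^ 2 + ‖y‖ ^ 2) := by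
    simpa only [sq] using parallelogram_law_with_norm ℝ x y
  have superadd := add_rpow_le_rpow_add (sq_nonneg ‖x‖) (sq_nonneg ‖y‖) hr
  have midpoint := (convexOn_rpow hr).2 (Set.mem_Ici.2 (sq_nonneg ‖x + y‖))
    (Set.mem_Ici.2 (sq_nonneg ‖x - y‖)) (by norm_num : (0 : ℝ) ≤ 1 / 2)
    (by norm_num : (0 : ℝ) ≤ 1 / 2) (by norm_num)
  simp only [smul_eq_mul, ← mul_add, parallelogram, hsq] at superadd midpoint
  rw [show 1 / 2 * (2 * (‖x‖ ^ 2 + ‖y‖ ^ 2)) = ‖x‖ ^ 2 + ‖y‖ ^ 2 by ring] at midpoint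
  linarith

lemma norm_rpow_add_mul_inner_add_le {p : ℝ} (hp : 2 ≤ p) (a b : E) :
    ‖a‖ ^ p + p * ‖a‖ ^ (p - 2) * inner ℝ a b + 2 ^ (1 - p) * ‖b‖ ^ p ≤ ‖a + b‖ ^ p := by
  have clarkson := two_mul_norm_rpow_add_norm_rpow_le hp (a + (1 / 2 : ℝ) • b) ((1 / 2 : ℝ) • b)
  have tangent := norm_rpow_add_mul_inner_le (by linarith : 1 ≤ p) a ((1 / 2 : ℝ) • b)
  have half_pow : 2 * ‖(1 / 2 : ℝ) • b‖ ^ p = 2 ^ (1 - p) * ‖b‖ ^ p := by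
    rw [norm_smul, mul_rpow (by positivity) (norm_nonneg b), Real.norm_of_nonneg (by norm_num),
      div_rpow zero_le_one zero_le_two, one_rpow, sub_eq_add_neg, rpow_add zero_lt_two,
      rpow_one, rpow_neg zero_le_two]
    ring
  rw [add_sub_cancel_right, add_assoc, ← add_smul, add_halves, one_smul] at clarkson
  rw [inner_smul_right] at tangent
  linarith

end InnerProductSpace

lemma Cfun_eq_inner (p : ℝ) (u v : ℂ) :
    Cfun p u v = ‖u‖ ^ p - ‖u - v‖ ^ p - p * ‖u - v‖ ^ (p - 2) * inner ℝ (u - v) v := by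
  rw [real_inner_comm, Complex.inner, Cfun]

lemma two_rpow_one_sub_mul_norm_rpow_le_Cfun {p : ℝ} (hp : 2 ≤ p) (u v : ℂ) :
    2 ^ (1 - p) * ‖v‖ ^ p ≤ Cfun p u v := by
  have key := norm_rpow_add_mul_inner_add_le hp (u - v) v
  rw [sub_add_cancel] at key
  rw [Cfun_eq_inner]
  linarith

/-- Lower bound `C_p(u,v) ≥ c_p |v|^p` with `c_p ∈ (0,1]`, and the vanishing criterion. -/
theorem stmt3 (p : ℝ) (hp : 2 ≤ p) :
    ∃ c : ℝ, c ∈ Set.Ioc (0 : ℝ) 1 ∧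
      (∀ u v : ℂ, c * ‖v‖ ^ p ≤ Cfun p u v) ∧
      (∀ u v : ℂ, Cfun p u v = 0 ↔ v = 0) := by
  have hc : (0 : ℝ) < 2 ^ (1 - p) := rpow_pos_of_pos zero_lt_two _
  refine ⟨2 ^ (1 - p), ⟨hc, rpow_le_one_of_one_le_of_nonpos one_le_two (by linarith)⟩,
    two_rpow_one_sub_mul_norm_rpow_le_Cfun hp, fun u v => ⟨fun h => ?_, ?_⟩⟩
  · have hv : ‖v‖ ^ p ≤ 0 :=
      nonpos_of_mul_nonpos_right (h ▸ two_rpow_one_sub_mul_norm_rpow_le_Cfun hp u v) hc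
    by_contra hv0
    exact (rpow_pos_of_pos (norm_pos_iff.2 hv0) p).not_ge hv
  · rintro rfl
    simp [Cfun]
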